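/- arXiv:2403.03666 — 5 statements merged into one kernel-verified Lean document; each statement's English description precedes it below -/
import Mathlib

section
/- Fix real numbers λ₁, λ_N with 0 < λ₁ < λ_N, and let g₂(λ) = (e^{1−λ} − e^{1−λ_N})/(e^{1−λ₁} − e^{1−λ_N}) − 1 + λ/λ_N. Suppose there exists μ ∈ (λ₁, λ_N) with g₂(μ) < 0. Then g₂ has exactly one zero λ₀ in the open interval (λ₁, λ_N); moreover g₂(λ₁) = λ₁/λ_N > 0, g₂(λ_N) = 0, g₂(λ) > 0 for λ ∈ (λ₁, λ₀), and g₂(λ) < 0 for λ ∈ (λ₀, λ_N). -/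
/-!
`g₂` is a positive multiple of `exp (1 - λ)` plus an affine function, hence strictly convex,
and it vanishes at `λ_N`. Strict convexity forces `g₂ < 0` on `(x, λ_N)` as soon as
`g₂ x ≤ 0`. The intermediate value theorem gives a zero `λ₀` between `λ₁`, where `g₂ > 0`,
and `μ`; then `g₂ < 0` on `(λ₀, λ_N)`, while a point of `(λ₁, λ₀)` with `g₂ ≤ 0` would make
`g₂ λ₀ < 0`. This sign pattern makes the zero unique.
-/

open Real Set

theorem strictConvexOn_exp_sub (a : ℝ) : StrictConvexOn ℝ univ fun x => exp (a - x) := by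
  refine ⟨convex_univ, fun x _ y _ hxy u v hu hv huv => ?_⟩
  have hexp := strictConvexOn_exp.2 (mem_univ (a - x)) (mem_univ (a - y))
    (sub_right_injective.ne hxy) hu hv huv
  have harg : u • (a - x) + v • (a - y) = a - (u • x + v • y) := by
    simp only [smul_eq_mul]; linear_combination a * huv
  rwa [harg] at hexp

theorem StrictConvexOn.div_const_add_affine {s : Set ℝ} {f : ℝ → ℝ} (hf : StrictConvexOn ℝ s f)
    {c : ℝ} (hc : 0 < c) (p q : ℝ) : StrictConvexOn ℝ s fun x => f x / c + (p * x + q) := by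
  refine ⟨hf.1, fun x hx y hy hxy u v hu hv huv => ?_⟩
  have h := div_lt_div_of_pos_right (hf.2 hx hy hxy hu hv huv) hc
  simp only [smul_eq_mul] at h ⊢
  rw [add_div, mul_div_assoc, mul_div_assoc] at h
  linear_combination h - q * huv

theorem StrictConvexOn.neg_of_nonpos_of_eq_zero {s : Set ℝ} {f : ℝ → ℝ}
    (hf : StrictConvexOn ℝ s f) {x b y : ℝ} (hx : x ∈ s) (hb : b ∈ s) (hfx : f x ≤ 0)
    (hfb : f b = 0) (hy : y ∈ Ioo x b) : f y < 0 := by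
  have hxb : x < b := hy.1.trans hy.2
  calc f y < max (f x) (f b) :=
        hf.lt_on_openSegment hx hb hxb.ne (by rwa [openSegment_eq_Ioo hxb])
    _ ≤ 0 := max_le hfx hfb.le

theorem StrictConvexOn.exists_unique_sign_change {f : ℝ → ℝ} {a b μ : ℝ}
    (hf : StrictConvexOn ℝ (Icc a b) f) (hcont : ContinuousOn f (Icc a b)) (ha : 0 < f a)
    (hb : f b = 0) (hμ : μ ∈ Ioo a b) (hfμ : f μ < 0) :
    ∃ x₀ ∈ Ioo a b, f x₀ = 0 ∧ (∀ x ∈ Ioo a b, f x = 0 → x = x₀) ∧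
      (∀ x ∈ Ioo a x₀, 0 < f x) ∧ (∀ x ∈ Ioo x₀ b, f x < 0) := by
  obtain ⟨x₀, hx₀, hfx₀⟩ := intermediate_value_Ioo' hμ.1.le
    (hcont.mono (Icc_subset_Icc_right hμ.2.le)) ⟨hfμ, ha⟩
  have hx₀ab : x₀ ∈ Ioo a b := ⟨hx₀.1, hx₀.2.trans hμ.2⟩
  have hbmem : b ∈ Icc a b := right_mem_Icc.2 (hμ.1.trans hμ.2).le
  have right : ∀ x ∈ Ioo x₀ b, f x < 0 := fun x hx =>
    hf.neg_of_nonpos_of_eq_zero (Ioo_subset_Icc_self hx₀ab) hbmem hfx₀.le hb hx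
  have left : ∀ x ∈ Ioo a x₀, 0 < f x := fun x hx => by
    by_contra! hfx
    exact (hf.neg_of_nonpos_of_eq_zero ⟨hx.1.le, (hx.2.trans hx₀ab.2).le⟩ hbmem hfx hb
      ⟨hx.2, hx₀ab.2⟩).ne hfx₀
  refine ⟨x₀, hx₀ab, hfx₀, fun x hx hfx => ?_, left, right⟩
  rcases lt_trichotomy x x₀ with hlt | heq | hgt
  · exact absurd hfx (left x ⟨hx.1, hlt⟩).ne'
  · exact heq
  · exact absurd hfx (right x ⟨hgt, hx.2⟩).ne

/-- For `0 < λ₁ < λ_N` and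
`g₂(λ) = (e^{1−λ} − e^{1−λ_N}) / (e^{1−λ₁} − e^{1−λ_N}) − 1 + λ/λ_N`,
if `g₂(μ) < 0` for some `μ ∈ (λ₁, λ_N)`, then `g₂(λ₁) = λ₁/λ_N > 0`, `g₂(λ_N) = 0`,
and `g₂` has exactly one zero `λ₀` in `(λ₁, λ_N)`, with `g₂ > 0` on `(λ₁, λ₀)` and
`g₂ < 0` on `(λ₀, λ_N)`. -/
theorem g2_unique_zero (l1 lN : ℝ) (h1 : 0 < l1) (h2 : l1 < lN)
    (g2 : ℝ → ℝ)
    (hg2 : ∀ l, g2 l =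
      (exp (1 - l) - exp (1 - lN)) / (exp (1 - l1) - exp (1 - lN)) - 1 + l / lN)
    (hneg : ∃ μ ∈ Ioo l1 lN, g2 μ < 0) :
    g2 l1 = l1 / lN ∧ 0 < g2 l1 ∧ g2 lN = 0 ∧
      ∃ l0 ∈ Ioo l1 lN, g2 l0 = 0 ∧
        (∀ l ∈ Ioo l1 lN, g2 l = 0 → l = l0) ∧
        (∀ l ∈ Ioo l1 l0, 0 < g2 l) ∧
        (∀ l ∈ Ioo l0 lN, g2 l < 0) := by
  set D := exp (1 - l1) - exp (1 - lN)
  have hD : 0 < D := sub_pos.2 (exp_lt_exp.2 (by linarith))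
  have hg2_eq : g2 = fun l => exp (1 - l) / D + (lN⁻¹ * l + (-(exp (1 - lN) / D) - 1)) :=
    funext fun l => by rw [hg2]; ring
  have hconv : StrictConvexOn ℝ (Icc l1 lN) g2 := hg2_eq ▸
    ((strictConvexOn_exp_sub 1).div_const_add_affine hD _ _).subset (subset_univ _)
      (convex_Icc _ _)
  have hcont : Continuous g2 := by rw [hg2_eq]; fun_prop
  have hl1 : g2 l1 = l1 / lN := by rw [hg2, div_self hD.ne']; ring
  have hlN : g2 lN = 0 := by rw [hg2, sub_self, zero_div, div_self (h1.trans h2).ne']; ring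
  have hpos : 0 < g2 l1 := hl1 ▸ div_pos h1 (h1.trans h2)
  obtain ⟨μ, hμ, hgμ⟩ := hneg
  exact ⟨hl1, hpos, hlN, hconv.exists_unique_sign_change hcont.continuousOn hpos hlN hμ hgμ⟩
end

section
/- Fix real numbers λ₁, λ_N with 0 < λ₁ < λ_N, and define g₀(λ) = h₁(λ)² − h₂(λ)² where h₁(λ) = (e^{1−λ} − e^{1−λ_N})/(e^{1−λ₁} − e^{1−λ_N}) and h₂(λ) = 1 − λ/λ_N. Suppose there exists μ ∈ (λ₁, λ_N) with h₁(μ) < h₂(μ), and let λ₀ ∈ (λ₁, λ_N) be the unique zero of h₁ − h₂ in (λ₁, λ_N). Then g₀(λ) ≥ 0 for all λ ∈ [λ₁, λ₀] and g₀(λ) ≤ 0 for all λ ∈ [λ₀, λ_N]. -/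
/-!
Both filters are nonnegative on `(-∞, λ_N]`, so the sign of `g₀ = (h₁ + h₂)(h₁ - h₂)` there is
that of `f = h₁ - h₂`. On the connected sets `[λ₁, λ₀)` and `(λ₀, λ_N)` the continuous function `f`
has no zero, hence constant sign: positive on the first because `f(λ₁) = 1 - λ₁/λ_N > 0`, negative
on the second because it contains the point `μ` where `f < 0` (`μ ≤ λ₀` is excluded by the first).
Passing to closures gives the signs on `[λ₁, λ₀]` and `[λ₀, λ_N]`.
-/

open Real Set

section SignOnPreconnected

variable {X α : Type*} [TopologicalSpace X] [TopologicalSpace α] [LinearOrder α]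
  [OrderClosedTopology α] {s : Set X} {f : X → α} {c : α} {a : X}

theorem IsPreconnected.forall_lt_of_forall_ne (hs : IsPreconnected s) (hf : ContinuousOn f s)
    (hc : ∀ x ∈ s, f x ≠ c) (ha : a ∈ s) (hfa : f a < c) : ∀ x ∈ s, f x < c := by
  intro x hx
  by_contra! hle
  obtain ⟨y, hy, hfy⟩ := hs.intermediate_value ha hx hf ⟨hfa.le, hle⟩
  exact hc y hy hfy

theorem IsPreconnected.forall_closure_le_of_forall_ne (hs : IsPreconnected s) (hf : Continuous f)
    (hc : ∀ x ∈ s, f x ≠ c) (ha : a ∈ s) (hfa : f a < c) : ∀ x ∈ closure s, f x ≤ c :=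
  closure_minimal (fun x hx => (hs.forall_lt_of_forall_ne hf.continuousOn hc ha hfa x hx).le)
    (isClosed_le hf continuous_const)

theorem IsPreconnected.forall_closure_ge_of_forall_ne (hs : IsPreconnected s) (hf : Continuous f)
    (hc : ∀ x ∈ s, f x ≠ c) (ha : a ∈ s) (hfa : c < f a) : ∀ x ∈ closure s, c ≤ f x :=
  IsPreconnected.forall_closure_le_of_forall_ne (α := αᵒᵈ) hs hf hc ha hfa

end SignOnPreconnected

noncomputable def globalFilter (l1 lN l : ℝ) : ℝ :=
  (exp (1 - l) - exp (1 - lN)) / (exp (1 - l1) - exp (1 - lN))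

noncomputable def localFilter (lN l : ℝ) : ℝ := 1 - l / lN

theorem continuous_globalFilter (l1 lN : ℝ) : Continuous (globalFilter l1 lN) := by
  unfold globalFilter
  fun_prop

theorem continuous_localFilter (lN : ℝ) : Continuous (localFilter lN) := by
  unfold localFilter
  fun_prop

theorem globalFilter_nonneg {l1 lN l : ℝ} (h1N : l1 < lN) (hl : l ≤ lN) :
    0 ≤ globalFilter l1 lN l := by
  have hexp1 : exp (1 - lN) < exp (1 - l1) := exp_lt_exp.2 (by linarith)
  have hexp : exp (1 - lN) ≤ exp (1 - l) := exp_le_exp.2 (by linarith)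
  exact div_nonneg (sub_nonneg.2 hexp) (sub_pos.2 hexp1).le

theorem globalFilter_self {l1 lN : ℝ} (h1N : l1 ≠ lN) : globalFilter l1 lN l1 = 1 :=
  div_self <| sub_ne_zero.2 <| exp_injective.ne <| by contrapose! h1N; linarith

theorem localFilter_nonneg {lN l : ℝ} (hN : 0 < lN) (hl : l ≤ lN) : 0 ≤ localFilter lN l :=
  sub_nonneg.2 <| (div_le_one hN).2 hl

theorem localFilter_lt_one {lN l : ℝ} (hN : 0 < lN) (hl : 0 < l) : localFilter lN l < 1 :=
  sub_lt_self 1 (div_pos hl hN)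

theorem localFilter_lt_globalFilter_self {l1 lN : ℝ} (h1 : 0 < l1) (h1N : l1 < lN) :
    localFilter lN l1 < globalFilter l1 lN l1 := by
  rw [globalFilter_self h1N.ne]
  exact localFilter_lt_one (h1.trans h1N) h1

theorem globalFilter_add_localFilter_nonneg {l1 lN l : ℝ} (hN : 0 < lN) (h1N : l1 < lN)
    (hl : l ≤ lN) : 0 ≤ globalFilter l1 lN l + localFilter lN l :=
  add_nonneg (globalFilter_nonneg h1N hl) (localFilter_nonneg hN hl)

theorem g0_sign_general (l1 lN : ℝ) (h1pos : 0 < l1) (h2lt : l1 < lN)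
    (h₁ h₂ g₀ : ℝ → ℝ)
    (hh₁ : ∀ l, h₁ l = (exp (1 - l) - exp (1 - lN)) / (exp (1 - l1) - exp (1 - lN)))
    (hh₂ : ∀ l, h₂ l = 1 - l / lN)
    (hg₀ : ∀ l, g₀ l = (h₁ l) ^ 2 - (h₂ l) ^ 2)
    (hneg : ∃ μ ∈ Ioo l1 lN, h₁ μ < h₂ μ)
    (l0 : ℝ) (hl0mem : l0 ∈ Ioo l1 lN)
    (hl0uniq : ∀ l ∈ Ioo l1 lN, h₁ l - h₂ l = 0 → l = l0) :
    (∀ l ∈ Icc l1 l0, 0 ≤ g₀ l) ∧ (∀ l ∈ Icc l0 lN, g₀ l ≤ 0) := by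
  obtain rfl : h₁ = globalFilter l1 lN := funext hh₁
  obtain rfl : h₂ = localFilter lN := funext hh₂
  obtain ⟨hl10, hl0N⟩ := hl0mem
  have hN : 0 < lN := h1pos.trans h2lt
  set f := fun l => globalFilter l1 lN l - localFilter lN l
  have hf : Continuous f := (continuous_globalFilter l1 lN).sub (continuous_localFilter lN)
  have hfl1 : 0 < f l1 := sub_pos.2 (localFilter_lt_globalFilter_self h1pos h2lt)
  have hleft : ∀ l ∈ Icc l1 l0, 0 ≤ f l := by
    rw [← closure_Ico hl10.ne]
    refine isPreconnected_Ico.forall_closure_ge_of_forall_ne hf (fun l ⟨h1l, hl0⟩ hfl => ?_)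
      (left_mem_Ico.2 hl10) hfl1
    rcases h1l.eq_or_lt with rfl | h1l
    · exact hfl1.ne' hfl
    · exact hl0.ne (hl0uniq l ⟨h1l, hl0.trans hl0N⟩ hfl)
  obtain ⟨μ, hμ, hfμ⟩ := hneg
  have hl0μ : l0 < μ := not_le.1 fun hμl0 => (hleft μ ⟨hμ.1.le, hμl0⟩).not_gt (sub_neg.2 hfμ)
  have hright : ∀ l ∈ Icc l0 lN, f l ≤ 0 := by
    rw [← closure_Ioo hl0N.ne]
    exact isPreconnected_Ioo.forall_closure_le_of_forall_ne hf
      (fun l hl hfl => hl.1.ne' (hl0uniq l ⟨hl10.trans hl.1, hl.2⟩ hfl)) ⟨hl0μ, hμ.2⟩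
      (sub_neg.2 hfμ)
  refine ⟨fun l hl => ?_, fun l hl => ?_⟩
  · rw [hg₀, sq_sub_sq]
    exact mul_nonneg (globalFilter_add_localFilter_nonneg hN h2lt (hl.2.trans hl0N.le)) (hleft l hl)
  · rw [hg₀, sq_sub_sq]
    exact mul_nonpos_of_nonneg_of_nonpos (globalFilter_add_localFilter_nonneg hN h2lt hl.2)
      (hright l hl)

/-- For `0 < λ₁ < λ_N`, with the global low-pass filter
`h₁(λ) = (e^{1−λ} − e^{1−λ_N}) / (e^{1−λ₁} − e^{1−λ_N})`, the local low-pass filter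
`h₂(λ) = 1 − λ/λ_N`, and `g₀ = h₁² − h₂²`: if `h₁(μ) < h₂(μ)` for some
`μ ∈ (λ₁, λ_N)` and `λ₀` is the unique zero of `h₁ − h₂` in `(λ₁, λ_N)`, then
`g₀ ≥ 0` on `[λ₁, λ₀]` and `g₀ ≤ 0` on `[λ₀, λ_N]`. -/
theorem g0_sign (l1 lN : ℝ) (h1pos : 0 < l1) (h2lt : l1 < lN)
    (h₁ h₂ g₀ : ℝ → ℝ)
    (hh₁ : ∀ l, h₁ l = (exp (1 - l) - exp (1 - lN)) / (exp (1 - l1) - exp (1 - lN)))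
    (hh₂ : ∀ l, h₂ l = 1 - l / lN)
    (hg₀ : ∀ l, g₀ l = (h₁ l) ^ 2 - (h₂ l) ^ 2)
    (hneg : ∃ μ ∈ Ioo l1 lN, h₁ μ < h₂ μ)
    (l0 : ℝ) (hl0mem : l0 ∈ Ioo l1 lN) (hl0zero : h₁ l0 - h₂ l0 = 0)
    (hl0uniq : ∀ l ∈ Ioo l1 lN, h₁ l - h₂ l = 0 → l = l0) :
    (∀ l ∈ Icc l1 l0, 0 ≤ g₀ l) ∧ (∀ l ∈ Icc l0 lN, g₀ l ≤ 0) :=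
  g0_sign_general l1 lN h1pos h2lt h₁ h₂ g₀ hh₁ hh₂ hg₀ hneg l0 hl0mem hl0uniq
end

section
/- Fix real numbers λ₁, λ_N with 0 < λ₁ < λ_N, and define g₀(λ) = h₁(λ)² − h₂(λ)² with h₁(λ) = (e^{1−λ} − e^{1−λ_N})/(e^{1−λ₁} − e^{1−λ_N}) and h₂(λ) = 1 − λ/λ_N. Suppose h₁ − h₂ has a unique zero λ₀ in (λ₁, λ_N). Let μ_1 ≤ μ_2 ≤ ⋯ ≤ μ_N be real numbers in [λ₁, λ_N], and let m (1 ≤ m < N) be such that μ_t ≤ λ₀ for t ≤ m and μ_t > λ₀ for t > m, with μ_m < μ_{m+1}. Assume Σ_{t=1}^m g₀(μ_t) > 0 and Σ_{t=1}^N g₀(μ_t) ≤ 0. Then Σ_{t=1}^N μ_t · (h₁(μ_t)² − h₂(μ_t)²) < 0. -/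
open Real Set Finset

/-!
The difference `h₁ - h₂` is convex (an exponential minus an affine function) and vanishes at
`λ₀` and at `λ_N`; hence it is nonnegative left of `λ₀` and nonpositive on `[λ₀, λ_N]`. As both
filters are nonnegative on `(-∞, λ_N]`, `g₀ = (h₁ - h₂)(h₁ + h₂)` has the same sign pattern, so
`g₀(μ_t) ≥ 0` exactly for `t ≤ m`. Weighting by the nondecreasing `μ_t` then moves positive
mass to weights `≤ μ_m` and negative mass to weights `≥ μ_{m+1}`, and the total stays below
`(μ_m - μ_{m+1}) ∑_{t ≤ m} g₀(μ_t) < 0`.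
-/

theorem Finset.sum_mul_neg_of_sign_change {ι : Type*} [DecidableEq ι] {A B : Finset ι}
    (hAB : Disjoint A B) {w g : ι → ℝ} {a b : ℝ} (hab : a < b) (hb : 0 ≤ b)
    (hwA : ∀ i ∈ A, w i ≤ a) (hwB : ∀ i ∈ B, b ≤ w i)
    (hgA : ∀ i ∈ A, 0 ≤ g i) (hgB : ∀ i ∈ B, g i ≤ 0)
    (hA : 0 < ∑ i ∈ A, g i) (hsum : ∑ i ∈ A ∪ B, g i ≤ 0) :
    ∑ i ∈ A ∪ B, w i * g i < 0 := by
  rw [sum_union hAB] at hsum ⊢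
  have hA_le : ∑ i ∈ A, w i * g i ≤ a * ∑ i ∈ A, g i := by
    rw [mul_sum]
    exact sum_le_sum fun i hi => mul_le_mul_of_nonneg_right (hwA i hi) (hgA i hi)
  have hB_le : ∑ i ∈ B, w i * g i ≤ b * ∑ i ∈ B, g i := by
    rw [mul_sum]
    exact sum_le_sum fun i hi => mul_le_mul_of_nonpos_right (hwB i hi) (hgB i hi)
  have hB_le_neg : b * ∑ i ∈ B, g i ≤ b * -∑ i ∈ A, g i :=
    mul_le_mul_of_nonneg_left (by linarith) hb
  linarith [mul_lt_mul_of_pos_right hab hA]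

section ConvexZeros

variable {s : Set ℝ} {f : ℝ → ℝ} {a b x : ℝ}

theorem ConvexOn.nonpos_of_mem_Icc_of_eq_zero (hf : ConvexOn ℝ s f) (ha : a ∈ s) (hb : b ∈ s)
    (hfa : f a = 0) (hfb : f b = 0) (hx : x ∈ Icc a b) : f x ≤ 0 := by
  have := hf.le_on_segment ha hb (by rwa [segment_eq_Icc (hx.1.trans hx.2)])
  rwa [hfa, hfb, max_self] at this

theorem ConvexOn.nonneg_of_le_of_eq_zero (hf : ConvexOn ℝ s f) (hx : x ∈ s) (hb : b ∈ s)
    (hfa : f a = 0) (hfb : f b = 0) (hxa : x ≤ a) (hab : a < b) : 0 ≤ f x := by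
  rcases hxa.eq_or_lt with rfl | hxa
  · exact hfa.ge
  have hslope := hf.slope_mono_adjacent hx hb hxa hab
  rw [hfa, hfb, sub_self, zero_div, div_le_iff₀ (sub_pos.2 hxa)] at hslope
  linarith

end ConvexZeros

theorem convexOn_exp_one_sub : ConvexOn ℝ univ fun x : ℝ => exp (1 - x) :=
  (convexOn_exp.comp_affineMap (AffineMap.const ℝ ℝ (1 : ℝ) - AffineMap.id ℝ ℝ)).congr
    fun _ _ => rfl

/-- The Min-Max normalized global low-pass filter `h₁`. -/
noncomputable def globalLowpass (l1 lN l : ℝ) : ℝ :=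
  (exp (1 - l) - exp (1 - lN)) / (exp (1 - l1) - exp (1 - lN))

/-- The local low-pass filter `h₂`. -/
noncomputable def localLowpass (lN l : ℝ) : ℝ := 1 - l / lN

section Lowpass

variable {l1 lN l0 l : ℝ}

theorem globalLowpass_self : globalLowpass l1 lN lN = 0 := by
  simp [globalLowpass]

theorem localLowpass_self (hlN : lN ≠ 0) : localLowpass lN lN = 0 := by
  simp [localLowpass, hlN]

theorem globalLowpass_nonneg (h : l1 ≤ lN) (hl : l ≤ lN) : 0 ≤ globalLowpass l1 lN l :=
  div_nonneg (sub_nonneg.2 (exp_le_exp.2 (by linarith)))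
    (sub_nonneg.2 (exp_le_exp.2 (by linarith)))

theorem localLowpass_nonneg (hlN : 0 < lN) (hl : l ≤ lN) : 0 ≤ localLowpass lN l :=
  sub_nonneg.2 ((div_le_one hlN).2 hl)

theorem convexOn_globalLowpass_sub_localLowpass (h : l1 ≤ lN) :
    ConvexOn ℝ univ fun l => globalLowpass l1 lN l - localLowpass lN l := by
  have hD : 0 ≤ exp (1 - l1) - exp (1 - lN) := sub_nonneg.2 (exp_le_exp.2 (by linarith))
  refine (((convexOn_exp_one_sub.smul (inv_nonneg.2 hD)).add
    ((LinearMap.mul ℝ ℝ lN⁻¹).convexOn convex_univ)).add_const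
      (-(exp (1 - lN) / (exp (1 - l1) - exp (1 - lN))) - 1)).congr fun l _ => ?_
  simp only [Pi.add_apply, smul_eq_mul, LinearMap.mul_apply', globalLowpass, localLowpass]
  ring

theorem sq_localLowpass_le_sq_globalLowpass (hlN : 0 < lN) (h : l1 ≤ lN) (hl0 : l0 < lN)
    (hzero : globalLowpass l1 lN l0 = localLowpass lN l0) (hl : l ≤ l0) :
    localLowpass lN l ^ 2 ≤ globalLowpass l1 lN l ^ 2 := by
  have hdiff := (convexOn_globalLowpass_sub_localLowpass h).nonneg_of_le_of_eq_zero
    (mem_univ l) (mem_univ lN) (sub_eq_zero.2 hzero)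
    (by rw [globalLowpass_self, localLowpass_self hlN.ne', sub_zero]) hl hl0
  exact pow_le_pow_left₀ (localLowpass_nonneg hlN (hl.trans hl0.le)) (sub_nonneg.1 hdiff) 2

theorem sq_globalLowpass_le_sq_localLowpass (hlN : lN ≠ 0) (h : l1 ≤ lN)
    (hzero : globalLowpass l1 lN l0 = localLowpass lN l0) (hl0 : l0 ≤ l) (hl : l ≤ lN) :
    globalLowpass l1 lN l ^ 2 ≤ localLowpass lN l ^ 2 := by
  have hdiff := (convexOn_globalLowpass_sub_localLowpass h).nonpos_of_mem_Icc_of_eq_zero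
    (mem_univ l0) (mem_univ lN) (sub_eq_zero.2 hzero)
    (by rw [globalLowpass_self, localLowpass_self hlN, sub_zero]) ⟨hl0, hl⟩
  exact pow_le_pow_left₀ (globalLowpass_nonneg h hl) (sub_nonpos.1 hdiff) 2

end Lowpass

theorem lowpass_energy_lt_general (l1 lN : ℝ) (h1pos : 0 < l1) (h2lt : l1 < lN)
    (h₁ h₂ g₀ : ℝ → ℝ)
    (hh₁ : ∀ l, h₁ l = (exp (1 - l) - exp (1 - lN)) / (exp (1 - l1) - exp (1 - lN)))
    (hh₂ : ∀ l, h₂ l = 1 - l / lN)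
    (hg₀ : ∀ l, g₀ l = (h₁ l) ^ 2 - (h₂ l) ^ 2)
    (l0 : ℝ) (hl0mem : l0 ∈ Ioo l1 lN) (hl0zero : h₁ l0 = h₂ l0)
    (N m : ℕ) (hm1 : 1 ≤ m) (hmN : m < N)
    (μ : ℕ → ℝ)
    (hmem : ∀ t : ℕ, 1 ≤ t → t ≤ N → μ t ∈ Icc l1 lN)
    (hmono : ∀ s t : ℕ, 1 ≤ s → s ≤ t → t ≤ N → μ s ≤ μ t)
    (hle : ∀ t : ℕ, 1 ≤ t → t ≤ m → μ t ≤ l0)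
    (hgt : ∀ t : ℕ, m < t → t ≤ N → l0 < μ t)
    (hgap : μ m < μ (m + 1))
    (hsumpos : 0 < ∑ t ∈ Finset.Icc 1 m, g₀ (μ t))
    (hsum : ∑ t ∈ Finset.Icc 1 N, g₀ (μ t) ≤ 0) :
    ∑ t ∈ Finset.Icc 1 N, μ t * ((h₁ (μ t)) ^ 2 - (h₂ (μ t)) ^ 2) < 0 := by
  obtain rfl : h₁ = globalLowpass l1 lN := funext hh₁
  obtain rfl : h₂ = localLowpass lN := funext hh₂
  have hlN : 0 < lN := h1pos.trans h2lt
  have hsplit : Finset.Icc 1 N = Finset.Icc 1 m ∪ Finset.Ioc m N := by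
    ext t
    simp only [Finset.mem_union, Finset.mem_Icc, Finset.mem_Ioc]
    omega
  have hdisj : Disjoint (Finset.Icc 1 m) (Finset.Ioc m N) := disjoint_left.2 fun t ht ht' => by
    simp only [Finset.mem_Icc, Finset.mem_Ioc] at ht ht'
    omega
  simp only [hg₀] at hsumpos hsum
  rw [hsplit] at hsum ⊢
  refine sum_mul_neg_of_sign_change hdisj hgap
    (h1pos.le.trans (hmem (m + 1) (by omega) (by omega)).1) ?_ ?_ ?_ ?_ hsumpos hsum
  · intro t ht
    obtain ⟨ht1, htm⟩ := Finset.mem_Icc.1 ht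
    exact hmono t m ht1 htm hmN.le
  · intro t ht
    obtain ⟨hmt, htN⟩ := Finset.mem_Ioc.1 ht
    exact hmono (m + 1) t (by omega) hmt htN
  · intro t ht
    obtain ⟨ht1, htm⟩ := Finset.mem_Icc.1 ht
    exact sub_nonneg.2 <|
      sq_localLowpass_le_sq_globalLowpass hlN h2lt.le hl0mem.2 hl0zero (hle t ht1 htm)
  · intro t ht
    obtain ⟨hmt, htN⟩ := Finset.mem_Ioc.1 ht
    exact sub_nonpos.2 <| sq_globalLowpass_le_sq_localLowpass hlN.ne' h2lt.le hl0zero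
      (hgt t hmt htN).le (hmem t (by omega) htN).2

/-- (Deterministic core of Theorem 1, low-pass part.) For `0 < λ₁ < λ_N`,
global/local low-pass filters `h₁, h₂` with `g₀ = h₁² − h₂²`, suppose `h₁ − h₂` has a unique
zero `λ₀` in `(λ₁, λ_N)`. Let `μ_1 ≤ ⋯ ≤ μ_N` be reals in `[λ₁, λ_N]` and `1 ≤ m < N` with
`μ_t ≤ λ₀` for `t ≤ m`, `μ_t > λ₀` for `t > m`, and `μ_m < μ_{m+1}`. If
`∑_{t=1}^m g₀(μ_t) > 0` and `∑_{t=1}^N g₀(μ_t) ≤ 0`, then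
`∑_{t=1}^N μ_t (h₁(μ_t)² − h₂(μ_t)²) < 0`. -/
theorem lowpass_energy_lt (l1 lN : ℝ) (h1pos : 0 < l1) (h2lt : l1 < lN)
    (h₁ h₂ g₀ : ℝ → ℝ)
    (hh₁ : ∀ l, h₁ l = (exp (1 - l) - exp (1 - lN)) / (exp (1 - l1) - exp (1 - lN)))
    (hh₂ : ∀ l, h₂ l = 1 - l / lN)
    (hg₀ : ∀ l, g₀ l = (h₁ l) ^ 2 - (h₂ l) ^ 2)
    (l0 : ℝ) (hl0mem : l0 ∈ Ioo l1 lN) (hl0zero : h₁ l0 = h₂ l0)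
    (hl0uniq : ∀ l ∈ Ioo l1 lN, h₁ l = h₂ l → l = l0)
    (N m : ℕ) (hm1 : 1 ≤ m) (hmN : m < N)
    (μ : ℕ → ℝ)
    (hmem : ∀ t : ℕ, 1 ≤ t → t ≤ N → μ t ∈ Icc l1 lN)
    (hmono : ∀ s t : ℕ, 1 ≤ s → s ≤ t → t ≤ N → μ s ≤ μ t)
    (hle : ∀ t : ℕ, 1 ≤ t → t ≤ m → μ t ≤ l0)
    (hgt : ∀ t : ℕ, m < t → t ≤ N → l0 < μ t)
    (hgap : μ m < μ (m + 1))
    (hsumpos : 0 < ∑ t ∈ Finset.Icc 1 m, g₀ (μ t))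
    (hsum : ∑ t ∈ Finset.Icc 1 N, g₀ (μ t) ≤ 0) :
    ∑ t ∈ Finset.Icc 1 N, μ t * ((h₁ (μ t)) ^ 2 - (h₂ (μ t)) ^ 2) < 0 :=
  lowpass_energy_lt_general l1 lN h1pos h2lt h₁ h₂ g₀ hh₁ hh₂ hg₀ l0 hl0mem hl0zero N m hm1 hmN μ
    hmem hmono hle hgt hgap hsumpos hsum
end

section
/- Fix real numbers λ₁, λ_N with 0 ≤ λ₁ < λ_N, and let h₃(λ) = (e^{λ} − e^{λ₁})/(e^{λ_N} − e^{λ₁}) and h₄(λ) = λ/λ_N. For any real numbers μ_1, …, μ_N ∈ [λ₁, λ_N], one has Σ_{t=1}^N μ_t · (h₃(μ_t)² − h₄(μ_t)²) ≤ 0; moreover the inequality is strict if there exists some t with μ_t ∈ (λ₁, λ_N) and μ_t > 0. -/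
/-!
By convexity of `exp`, on `[λ₁, λ_N]` the global filter lies below the chord
`(λ - λ₁) / (λ_N - λ₁)`, strictly in the interior, and since `λ₁ ≥ 0` that chord lies below
the local filter `λ / λ_N`. Both filters are nonnegative there, so every summand
`μ_t (h₃(μ_t)² − h₄(μ_t)²)` is nonpositive, and negative at an interior `μ_t > 0`.
-/

open Real Set Finset

section Secant

variable {s : Set ℝ} {f : ℝ → ℝ} {a b x : ℝ}

theorem StrictConvexOn.sub_div_sub_lt_sub_div_sub (hf : StrictConvexOn ℝ s f) (ha : a ∈ s)
    (hb : b ∈ s) (hax : a < x) (hxb : x < b) (hfab : f a < f b) :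
    (f x - f a) / (f b - f a) < (x - a) / (b - a) := by
  have hx : x ∈ s := hf.1.ordConnected.out ha hb ⟨hax.le, hxb.le⟩
  have hsecant := hf.secant_strict_mono ha hx hb hax.ne' (hax.trans hxb).ne' hxb
  rw [div_lt_div_iff₀ (sub_pos.2 hax) (sub_pos.2 (hax.trans hxb))] at hsecant
  rw [div_lt_div_iff₀ (sub_pos.2 hfab) (sub_pos.2 (hax.trans hxb))]
  linarith

theorem StrictConvexOn.sub_div_sub_le_sub_div_sub (hf : StrictConvexOn ℝ s f) (ha : a ∈ s)
    (hb : b ∈ s) (hax : a ≤ x) (hxb : x ≤ b) (hfab : f a < f b) :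
    (f x - f a) / (f b - f a) ≤ (x - a) / (b - a) := by
  obtain rfl | hax := hax.eq_or_lt
  · simp
  obtain rfl | hxb := hxb.eq_or_lt
  · rw [div_self (sub_pos.2 hfab).ne', div_self (sub_pos.2 hax).ne']
  · exact (hf.sub_div_sub_lt_sub_div_sub ha hb hax hxb hfab).le

end Secant

theorem sub_div_sub_le_div {a b x : ℝ} (ha : 0 ≤ a) (hab : a < b) (hxb : x ≤ b) :
    (x - a) / (b - a) ≤ x / b := by
  rw [div_le_div_iff₀ (sub_pos.2 hab) (ha.trans_lt hab)]
  nlinarith [mul_le_mul_of_nonneg_left hxb ha]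

theorem mul_sq_sub_sq_nonpos {m u v : ℝ} (hm : 0 ≤ m) (hu : 0 ≤ u) (huv : u ≤ v) :
    m * (u ^ 2 - v ^ 2) ≤ 0 :=
  mul_nonpos_of_nonneg_of_nonpos hm (sub_nonpos.2 (pow_le_pow_left₀ hu huv 2))

theorem mul_sq_sub_sq_neg {m u v : ℝ} (hm : 0 < m) (hu : 0 ≤ u) (huv : u < v) :
    m * (u ^ 2 - v ^ 2) < 0 :=
  mul_neg_of_pos_of_neg hm (sub_neg.2 (pow_lt_pow_left₀ huv hu two_ne_zero))

/-- (Deterministic core of Theorem 1, high-pass part.) For `0 ≤ λ₁ < λ_N`,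
with `h₃(λ) = (e^λ − e^{λ₁}) / (e^{λ_N} − e^{λ₁})` and `h₄(λ) = λ/λ_N`, for any reals
`μ_1, …, μ_N ∈ [λ₁, λ_N]` we have `∑_t μ_t (h₃(μ_t)² − h₄(μ_t)²) ≤ 0`, strictly if some
`μ_t ∈ (λ₁, λ_N)` with `μ_t > 0`. -/
theorem highpass_energy_le (l1 lN : ℝ) (h1 : 0 ≤ l1) (h2 : l1 < lN)
    (h₃ h₄ : ℝ → ℝ)
    (hh₃ : ∀ l, h₃ l = (exp l - exp l1) / (exp lN - exp l1))
    (hh₄ : ∀ l, h₄ l = l / lN)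
    (N : ℕ) (μ : Fin N → ℝ) (hmem : ∀ t, μ t ∈ Icc l1 lN) :
    ∑ t : Fin N, μ t * ((h₃ (μ t)) ^ 2 - (h₄ (μ t)) ^ 2) ≤ 0 ∧
      ((∃ t : Fin N, μ t ∈ Ioo l1 lN ∧ 0 < μ t) →
        ∑ t : Fin N, μ t * ((h₃ (μ t)) ^ 2 - (h₄ (μ t)) ^ 2) < 0) := by
  have hexp : exp l1 < exp lN := exp_lt_exp.2 h2
  have h₃_nonneg : ∀ l ∈ Icc l1 lN, 0 ≤ h₃ l := fun l hl =>
    (hh₃ l).symm ▸ div_nonneg (sub_nonneg.2 (exp_le_exp.2 hl.1)) (sub_pos.2 hexp).le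
  have h₃_le_h₄ : ∀ l ∈ Icc l1 lN, h₃ l ≤ h₄ l := fun l hl => by
    rw [hh₃, hh₄]
    exact (strictConvexOn_exp.sub_div_sub_le_sub_div_sub trivial trivial hl.1 hl.2 hexp).trans
      (sub_div_sub_le_div h1 h2 hl.2)
  have h₃_lt_h₄ : ∀ l ∈ Ioo l1 lN, h₃ l < h₄ l := fun l hl => by
    rw [hh₃, hh₄]
    exact (strictConvexOn_exp.sub_div_sub_lt_sub_div_sub trivial trivial hl.1 hl.2 hexp).trans_le
      (sub_div_sub_le_div h1 h2 hl.2.le)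
  have hterm : ∀ t ∈ Finset.univ, μ t * ((h₃ (μ t)) ^ 2 - (h₄ (μ t)) ^ 2) ≤ 0 := fun t _ =>
    mul_sq_sub_sq_nonpos (h1.trans (hmem t).1) (h₃_nonneg _ (hmem t)) (h₃_le_h₄ _ (hmem t))
  refine ⟨sum_nonpos hterm, fun ⟨t, ht, htpos⟩ => sum_neg' hterm ⟨t, mem_univ t, ?_⟩⟩
  exact mul_sq_sub_sq_neg htpos (h₃_nonneg _ (hmem t)) (h₃_lt_h₄ _ ht)
end

section
/- In the setting of the previous statement, let (Ω, 𝔽, ℙ) be a probability space and a_1, …, a_N : Ω → ℝ be random variables such that each a_t² is integrable and E[a_t²] = σ² for a common constant σ² > 0. If some μ_t satisfies μ_t ∈ (λ₁, λ_N) and μ_t > 0, then E[ Σ_{t=1}^N a_t² · μ_t · (h₃(μ_t)² − h₄(μ_t)²) ] < 0. -/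
/-!
By convexity of `exp`, the min-max normalized exponential on `[λ₁, λ_N]` lies below the chord
`(λ - λ₁) / (λ_N - λ₁)`, strictly in the interior, and for `λ₁ ≥ 0` that chord lies below
`λ / λ_N`. Hence every coefficient `μ_t (h₃(μ_t)² - h₄(μ_t)²)` is `≤ 0`, one of them is `< 0`,
and by linearity the expectation is `σ²` times their sum.
-/

open Real Set Finset MeasureTheory

/-- The min-max normalization of `f` on `[a, b]`; `h₃ = minMaxNormalize exp λ₁ λ_N` and
`h₄ = minMaxNormalize id 0 λ_N`. -/
noncomputable def minMaxNormalize (f : ℝ → ℝ) (a b x : ℝ) : ℝ :=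
  (f x - f a) / (f b - f a)

lemma minMaxNormalize_id (a b x : ℝ) : minMaxNormalize id a b x = (x - a) / (b - a) := rfl

lemma minMaxNormalize_nonneg {f : ℝ → ℝ} {a b x : ℝ} (hx : f a ≤ f x) (hb : f a ≤ f b) :
    0 ≤ minMaxNormalize f a b x :=
  div_nonneg (sub_nonneg.2 hx) (sub_nonneg.2 hb)

lemma ConvexOn.minMaxNormalize_le_id {f : ℝ → ℝ} {a b x : ℝ}
    (hf : ConvexOn ℝ (Icc a b) f) (hab : f a < f b) (hx : x ∈ Icc a b) :
    minMaxNormalize f a b x ≤ minMaxNormalize id a b x := by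
  have hlt : a < b := (hx.1.trans hx.2).lt_of_ne (by rintro rfl; exact hab.ne rfl)
  rcases hx.1.eq_or_lt with rfl | hax
  · simp [minMaxNormalize]
  have hslope : (f x - f a) / (x - a) ≤ (f b - f a) / (b - a) :=
    hf.secant_mono (left_mem_Icc.2 hlt.le) hx (right_mem_Icc.2 hlt.le) hax.ne' hlt.ne' hx.2
  rw [minMaxNormalize_id, minMaxNormalize, div_le_div_iff₀ (sub_pos.2 hab) (sub_pos.2 hlt)]
  rw [div_le_div_iff₀ (sub_pos.2 hax) (sub_pos.2 hlt)] at hslope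
  linarith

lemma StrictConvexOn.minMaxNormalize_lt_id {f : ℝ → ℝ} {a b x : ℝ}
    (hf : StrictConvexOn ℝ (Icc a b) f) (hab : f a < f b) (hx : x ∈ Ioo a b) :
    minMaxNormalize f a b x < minMaxNormalize id a b x := by
  have hlt : a < b := hx.1.trans hx.2
  have hslope : (f x - f a) / (x - a) < (f b - f a) / (b - a) :=
    hf.secant_strict_mono (left_mem_Icc.2 hlt.le) (Ioo_subset_Icc_self hx)
      (right_mem_Icc.2 hlt.le) hx.1.ne' hlt.ne' hx.2
  rw [minMaxNormalize_id, minMaxNormalize, div_lt_div_iff₀ (sub_pos.2 hab) (sub_pos.2 hlt)]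
  rw [div_lt_div_iff₀ (sub_pos.2 hx.1) (sub_pos.2 hlt)] at hslope
  linarith

lemma minMaxNormalize_id_le_of_nonneg {a b x : ℝ} (ha : 0 ≤ a) (hab : a < b) (hxb : x ≤ b) :
    minMaxNormalize id a b x ≤ minMaxNormalize id 0 b x := by
  simp only [minMaxNormalize_id, sub_zero]
  rw [div_le_div_iff₀ (sub_pos.2 hab) (ha.trans_lt hab)]
  nlinarith

lemma minMaxNormalize_exp_le {a b x : ℝ} (ha : 0 ≤ a) (hab : a < b) (hx : x ∈ Icc a b) :
    minMaxNormalize exp a b x ≤ minMaxNormalize id 0 b x :=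
  ((convexOn_exp.subset (subset_univ _) (convex_Icc a b)).minMaxNormalize_le_id
    (exp_lt_exp.2 hab) hx).trans (minMaxNormalize_id_le_of_nonneg ha hab hx.2)

lemma minMaxNormalize_exp_lt {a b x : ℝ} (ha : 0 ≤ a) (hab : a < b) (hx : x ∈ Ioo a b) :
    minMaxNormalize exp a b x < minMaxNormalize id 0 b x :=
  ((strictConvexOn_exp.subset (subset_univ _) (convex_Icc a b)).minMaxNormalize_lt_id
    (exp_lt_exp.2 hab) hx).trans_le (minMaxNormalize_id_le_of_nonneg ha hab hx.2.le)

lemma integral_sum_mul_const_of_integral_eq {ι Ω : Type*} [Fintype ι] [MeasurableSpace Ω]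
    {P : Measure Ω} {X : ι → Ω → ℝ} {m : ℝ} (hint : ∀ t, Integrable (X t) P)
    (hmean : ∀ t, ∫ ω, X t ω ∂P = m) (c : ι → ℝ) :
    ∫ ω, ∑ t, X t ω * c t ∂P = m * ∑ t, c t := by
  rw [integral_finsetSum _ fun t _ => (hint t).mul_const (c t), Finset.mul_sum]
  simp only [integral_mul_const, hmean]

theorem expected_highpass_energy_lt_general (l1 lN : ℝ) (h1 : 0 ≤ l1) (h2 : l1 < lN)
    (h₃ h₄ : ℝ → ℝ)
    (hh₃ : ∀ l, h₃ l = (exp l - exp l1) / (exp lN - exp l1))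
    (hh₄ : ∀ l, h₄ l = l / lN)
    (N : ℕ) (μ : Fin N → ℝ) (hmem : ∀ t, μ t ∈ Icc l1 lN)
    (Ω : Type*) [MeasureSpace Ω]
    (a : Fin N → Ω → ℝ) (σ2 : ℝ) (hσ2 : 0 < σ2)
    (hint : ∀ t : Fin N, Integrable (fun ω => (a t ω) ^ 2))
    (hvar : ∀ t : Fin N, ∫ ω, (a t ω) ^ 2 = σ2)
    (hstrict : ∃ t : Fin N, μ t ∈ Ioo l1 lN ∧ 0 < μ t) :
    ∫ ω, ∑ t : Fin N,
        (a t ω) ^ 2 * (μ t * ((h₃ (μ t)) ^ 2 - (h₄ (μ t)) ^ 2)) < 0 := by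
  have hh₃' : ∀ l, h₃ l = minMaxNormalize exp l1 lN l := hh₃
  have hh₄' : ∀ l, h₄ l = minMaxNormalize id 0 lN l := fun l => by
    rw [hh₄, minMaxNormalize_id, sub_zero, sub_zero]
  have hnonneg : ∀ t, 0 ≤ h₃ (μ t) := fun t =>
    (hh₃' _).symm ▸ minMaxNormalize_nonneg (exp_le_exp.2 (hmem t).1) (exp_le_exp.2 h2.le)
  have hcoef_nonpos : ∀ t, μ t * (h₃ (μ t) ^ 2 - h₄ (μ t) ^ 2) ≤ 0 := fun t =>
    mul_nonpos_of_nonneg_of_nonpos (h1.trans (hmem t).1) <| sub_nonpos.2 <|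
      pow_le_pow_left₀ (hnonneg t)
        (by rw [hh₃', hh₄']; exact minMaxNormalize_exp_le h1 h2 (hmem t)) 2
  have hcoef_neg : ∃ t ∈ Finset.univ, μ t * (h₃ (μ t) ^ 2 - h₄ (μ t) ^ 2) < 0 := by
    obtain ⟨t, ht, hpos⟩ := hstrict
    refine ⟨t, mem_univ t, mul_neg_of_pos_of_neg hpos (sub_neg.2 ?_)⟩
    exact pow_lt_pow_left₀ (by rw [hh₃', hh₄']; exact minMaxNormalize_exp_lt h1 h2 ht)
      (hnonneg t) two_ne_zero
  rw [integral_sum_mul_const_of_integral_eq hint hvar]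
  exact mul_neg_of_pos_of_neg hσ2 (sum_neg' (fun t _ => hcoef_nonpos t) hcoef_neg)

/-- (Probabilistic form of Theorem 1, high-pass part.) In the setting of
Statement 13, if `a_1, …, a_N` are random variables on a probability space with each `a_t²`
integrable and of common mean `E[a_t²] = σ² > 0`, and some `μ_t ∈ (λ₁, λ_N)` with
`μ_t > 0`, then `E[∑_t a_t² μ_t (h₃(μ_t)² − h₄(μ_t)²)] < 0`. -/
theorem expected_highpass_energy_lt (l1 lN : ℝ) (h1 : 0 ≤ l1) (h2 : l1 < lN)
    (h₃ h₄ : ℝ → ℝ)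
    (hh₃ : ∀ l, h₃ l = (exp l - exp l1) / (exp lN - exp l1))
    (hh₄ : ∀ l, h₄ l = l / lN)
    (N : ℕ) (μ : Fin N → ℝ) (hmem : ∀ t, μ t ∈ Icc l1 lN)
    (Ω : Type*) [MeasureSpace Ω] [IsProbabilityMeasure (volume : Measure Ω)]
    (a : Fin N → Ω → ℝ) (σ2 : ℝ) (hσ2 : 0 < σ2)
    (hint : ∀ t : Fin N, Integrable (fun ω => (a t ω) ^ 2))
    (hvar : ∀ t : Fin N, ∫ ω, (a t ω) ^ 2 = σ2)
    (hstrict : ∃ t : Fin N, μ t ∈ Ioo l1 lN ∧ 0 < μ t) :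
    ∫ ω, ∑ t : Fin N,
        (a t ω) ^ 2 * (μ t * ((h₃ (μ t)) ^ 2 - (h₄ (μ t)) ^ 2)) < 0 :=
  expected_highpass_energy_lt_general l1 lN h1 h2 h₃ h₄ hh₃ hh₄ N μ hmem Ω a σ2 hσ2 hint hvar
    hstrict
end
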